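/- Let p > 3 be a prime and let G = Φ₃₅(1⁶) be the group of order p⁶ with presentation on generators α, α₁, α₂, α₃, α₄, α₅ and relations [αᵢ,α] = αᵢ₊₁ for i = 1,2,3,4, αᵖ = 1, and αⱼ^(p) = 1 for j = 1,…,5, where αⱼ^(p) denotes αⱼᵖ·αⱼ₊₁^C(p,2)·αⱼ₊₂^C(p,3)·⋯·α₅^C(p,6−j); every commutator of a pair of generators not listed among these relations is declared trivial. Then the Bogomolov multiplier B₀(G) is trivial. -/

import Mathlib

/-!
Φ₃₅(1⁶): relations [αᵢ,α]=αᵢ₊₁ (i=1..4), αᵖ=1, αⱼ^(p)=1 (j=1..5).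
-/

namespace Stmt11

/-- The additive group `ℚ/ℤ`. -/
abbrev QZ : Type := ℚ ⧸ AddSubgroup.zmultiples (1 : ℚ)

/-- An inhomogeneous 2-cocycle on `G` with values in `ℚ/ℤ` (trivial `G`-action). -/
def IsTwoCocycle {G : Type} [Group G] (f : G → G → QZ) : Prop :=
  ∀ g h j : G, f h j - f (g * h) j + f g (h * j) - f g h = 0

/-- An inhomogeneous 2-coboundary on `G` with values in `ℚ/ℤ` (trivial `G`-action). -/
def IsTwoCoboundary {G : Type} [Group G] (f : G → G → QZ) : Prop :=
  ∃ c : G → QZ, ∀ g h : G, f g h = c h - c (g * h) + c g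

/-- A subgroup is bicyclic if it is abelian and generated by at most two elements
(equivalently, cyclic or a direct product of two cyclic groups). -/
def IsBicyclic {G : Type} [Group G] (A : Subgroup G) : Prop :=
  (∀ x y : A, x * y = y * x) ∧ ∃ a b : G, A = Subgroup.closure {a, b}

/-- The Bogomolov multiplier `B₀(G) ⊆ H²(G, ℚ/ℤ)` is trivial, phrased at the level of
2-cocycles: every 2-cocycle whose restriction to each bicyclic subgroup is a coboundary
(i.e. whose class restricts to zero on each bicyclic subgroup) is itself a coboundary
(i.e. its class is zero). -/
def BogomolovMultiplierIsTrivial (G : Type) [Group G] : Prop :=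
  ∀ f : G → G → QZ, IsTwoCocycle f →
    (∀ A : Subgroup G, IsBicyclic A → IsTwoCoboundary (fun a b : ↥A => f ↑a ↑b)) →
    IsTwoCoboundary f

/-- The Bogomolov multiplier `B₀(G) ⊆ H²(G, ℚ/ℤ)` is nontrivial, phrased at the level of
2-cocycles. -/
def BogomolovMultiplierIsNontrivial (G : Type) [Group G] : Prop :=
  ∃ f : G → G → QZ, IsTwoCocycle f ∧
    (∀ A : Subgroup G, IsBicyclic A → IsTwoCoboundary (fun a b : ↥A => f ↑a ↑b)) ∧
    ¬ IsTwoCoboundary f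

/-- The generators. -/
inductive Gen | a | a1 | a2 | a3 | a4 | a5

open FreeGroup

/-- The commutator `[x,y] = x⁻¹y⁻¹xy`. -/
def c (x y : FreeGroup Gen) : FreeGroup Gen := x⁻¹ * y⁻¹ * x * y

/-- The defining relators. -/
def rels (p : ℕ) : Set (FreeGroup Gen) :=
  { c (of .a1) (of .a) * (of Gen.a2)⁻¹,
    c (of .a2) (of .a) * (of Gen.a3)⁻¹,
    c (of .a3) (of .a) * (of Gen.a4)⁻¹,
    c (of .a4) (of .a) * (of Gen.a5)⁻¹,
    c (of .a) (of .a5),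
    c (of .a1) (of .a2),
    c (of .a1) (of .a3),
    c (of .a1) (of .a4),
    c (of .a1) (of .a5),
    c (of .a2) (of .a3),
    c (of .a2) (of .a4),
    c (of .a2) (of .a5),
    c (of .a3) (of .a4),
    c (of .a3) (of .a5),
    c (of .a4) (of .a5),
    (of Gen.a) ^ p,
    (of Gen.a1) ^ p * (of Gen.a2) ^ (p.choose 2) * (of Gen.a3) ^ (p.choose 3) * (of Gen.a4) ^ (p.choose 4) * (of Gen.a5) ^ (p.choose 5),
    (of Gen.a2) ^ p * (of Gen.a3) ^ (p.choose 2) * (of Gen.a4) ^ (p.choose 3) * (of Gen.a5) ^ (p.choose 4),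
    (of Gen.a3) ^ p * (of Gen.a4) ^ (p.choose 2) * (of Gen.a5) ^ (p.choose 3),
    (of Gen.a4) ^ p * (of Gen.a5) ^ (p.choose 2),
    (of Gen.a5) ^ p }

end Stmt11

/-!
A 2-cocycle `f` is a coboundary iff the central extension `E` of `G` by `ℚ/ℤ` it defines has a
homomorphic section. The bicyclic hypothesis makes `f` symmetric on commuting pairs. Let
`A = ⟨α₁, …, α₅⟩`, abelian and stable under `σ v = α⁻¹ v α`. A symmetric cocycle on an abelian
group is a coboundary because `ℚ/ℤ` is an injective `ℤ`-module, so `A` lifts to `E` by a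
homomorphism `J₀`; since `ℚ/ℤ` is divisible, `α` lifts to some `t` with `tᵖ = 1`. Conjugation by
`t` moves `J₀` by a homomorphism `λ : A → ℚ/ℤ`, `t⁻¹ J₀(v) t = J₀(σ v) λ(v)`. By the symmetry of
`f`, `λ` vanishes on the fixed points of `σ`, so by injectivity `λ = μ ∘ (σ - 1)` for some
`μ : A → ℚ/ℤ`, and `J = J₀ μ` satisfies `t⁻¹ J(v) t = J(σ v)`. Then `t` and `J(αᵢ)` satisfy the
defining relations of `G` and give the section.
-/

namespace Stmt11

section Cocycle

variable {G : Type} [Group G] {f : G → G → QZ}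

namespace IsTwoCocycle

variable (hf : IsTwoCocycle f)
include hf

theorem add_apply_mul (g h j : G) : f g h + f (g * h) j = f h j + f g (h * j) := by
  rw [← sub_eq_zero, ← neg_eq_zero, ← hf g h j]
  abel

theorem apply_one_left (g : G) : f 1 g = f 1 1 := by
  simpa using (hf.add_apply_mul 1 1 g).symm

theorem apply_one_right (g : G) : f g 1 = f 1 1 := by
  simpa using hf.add_apply_mul g 1 1

theorem apply_inv_self (g : G) : f g⁻¹ g = f g g⁻¹ := by
  have := hf.add_apply_mul g g⁻¹ g
  rw [mul_inv_cancel, inv_mul_cancel, hf.apply_one_left g, hf.apply_one_right g] at this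
  exact (add_right_cancel this).symm

theorem comp {H : Type} [Group H] (i : H →* G) : IsTwoCocycle fun a b => f (i a) (i b) := by
  intro g h j
  simp only [map_mul]
  exact hf (i g) (i h) (i j)

end IsTwoCocycle

theorem apply_comm_of_bicyclic
    (hb : ∀ A : Subgroup G, IsBicyclic A → IsTwoCoboundary fun a b : A => f a b)
    {x y : G} (h : x * y = y * x) : f x y = f y x := by
  have hcomm : ∀ a ∈ ({x, y} : Set G), ∀ b ∈ ({x, y} : Set G), a * b = b * a := by
    rintro a (rfl | rfl) b (rfl | rfl) <;> first | rfl | exact h | exact h.symm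
  have := Subgroup.isMulCommutative_closure hcomm
  obtain ⟨c, hc⟩ := hb _ ⟨fun u v => mul_comm' u v, x, y, rfl⟩
  have hx : x ∈ Subgroup.closure {x, y} := Subgroup.subset_closure (by simp)
  have hy : y ∈ Subgroup.closure {x, y} := Subgroup.subset_closure (by simp)
  have hxy := hc ⟨x, hx⟩ ⟨y, hy⟩
  have hyx := hc ⟨y, hy⟩ ⟨x, hx⟩
  rw [mul_comm' (⟨y, hy⟩ : Subgroup.closure _)] at hyx
  rw [show f x y = _ from hxy, show f y x = _ from hyx]
  abel

end Cocycle

theorem exists_addMonoidHom_comp_eq_of_ker_le {M N Q : Type*} [AddCommGroup M] [AddCommGroup N]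
    [AddCommGroup Q] [DivisibleBy Q ℤ] (τ : M →+ N) (d : M →+ Q) (h : τ.ker ≤ d.ker) :
    ∃ μ : N →+ Q, μ.comp τ = d := by
  obtain ⟨μ, hμ⟩ := (Module.Baer.of_divisible Q).extension_property_addMonoidHom
    (QuotientAddGroup.kerLift τ) (QuotientAddGroup.kerLift_injective τ)
    (QuotientAddGroup.lift τ.ker d h)
  exact ⟨μ, AddMonoidHom.ext fun x => DFunLike.congr_fun hμ (x : M ⧸ τ.ker)⟩

section Extension

variable {G : Type} [Group G] {f : G → G → QZ}

@[ext] structure CocycleExtension (_hf : IsTwoCocycle f) : Type where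
  q : QZ
  g : G

namespace CocycleExtension

variable {hf : IsTwoCocycle f}

-- `f` is not assumed normalized, hence the unit `⟨-f 1 1, 1⟩`.
instance : Mul (CocycleExtension hf) := ⟨fun a b => ⟨a.q + b.q + f a.g b.g, a.g * b.g⟩⟩
instance : One (CocycleExtension hf) := ⟨⟨-f 1 1, 1⟩⟩
instance : Inv (CocycleExtension hf) := ⟨fun a => ⟨-a.q - f a.g a.g⁻¹ - f 1 1, a.g⁻¹⟩⟩

@[simp] theorem mul_q (a b : CocycleExtension hf) : (a * b).q = a.q + b.q + f a.g b.g := rfl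
@[simp] theorem mul_g (a b : CocycleExtension hf) : (a * b).g = a.g * b.g := rfl
@[simp] theorem inv_g (a : CocycleExtension hf) : a⁻¹.g = a.g⁻¹ := rfl

instance : Group (CocycleExtension hf) :=
  Group.ofLeftAxioms
    (fun a b c => by
      ext
      · simp only [mul_q, mul_g]
        linear_combination (norm := abel) hf.add_apply_mul a.g b.g c.g
      · exact mul_assoc a.g b.g c.g)
    (fun a => by
      ext
      · show -f 1 1 + a.q + f 1 a.g = a.q
        rw [hf.apply_one_left a.g]
        abel
      · exact one_mul a.g)
    (fun a => by
      ext
      · show -a.q - f a.g a.g⁻¹ - f 1 1 + a.q + f a.g⁻¹ a.g = -f 1 1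
        rw [hf.apply_inv_self]
        abel
      · exact inv_mul_cancel a.g)

variable (hf) in
def proj : CocycleExtension hf →* G where
  toFun := g
  map_one' := rfl
  map_mul' _ _ := rfl

variable (hf) in
def central (q : QZ) : CocycleExtension hf := ⟨q - f 1 1, 1⟩

@[simp] theorem central_g (q : QZ) : (central hf q).g = 1 := rfl

theorem mk_mul_central (r q : QZ) (x : G) :
    (⟨r, x⟩ : CocycleExtension hf) * central hf q = ⟨r + q, x⟩ := by
  ext
  · show r + (q - f 1 1) + f x 1 = r + q
    rw [hf.apply_one_right x]
    abel
  · exact mul_one x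

theorem central_mul_mk (q r : QZ) (x : G) :
    central hf q * (⟨r, x⟩ : CocycleExtension hf) = ⟨q + r, x⟩ := by
  ext
  · show q - f 1 1 + r + f 1 x = q + r
    rw [hf.apply_one_left x]
    abel
  · exact one_mul x

theorem central_commute (q : QZ) (a : CocycleExtension hf) : Commute (central hf q) a := by
  show central hf q * ⟨a.q, a.g⟩ = ⟨a.q, a.g⟩ * central hf q
  rw [central_mul_mk, mk_mul_central, add_comm]

theorem central_add (q r : QZ) : central hf (q + r) = central hf q * central hf r := by
  show _ = central hf q * ⟨r - f 1 1, 1⟩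
  rw [central_mul_mk, central, add_sub_assoc]

@[simp] theorem central_zero : central hf 0 = 1 := by
  ext
  · exact zero_sub _
  · rfl

theorem central_nsmul (q : QZ) (n : ℕ) : central hf (n • q) = central hf q ^ n := by
  induction n with
  | zero => simp
  | succ n ih => rw [succ_nsmul, central_add, ih, pow_succ]

theorem central_injective : Function.Injective (central hf) := fun q r h => by
  simpa [central] using congrArg CocycleExtension.q h

theorem eq_mul_central_of_g_eq {a b : CocycleExtension hf} (h : a.g = b.g) :
    a = b * central hf (a.q - b.q) := by
  show a = ⟨b.q, b.g⟩ * central hf (a.q - b.q)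
  rw [mk_mul_central, add_sub_cancel, ← h]

theorem mul_comm_of_g_commute {a b : CocycleExtension hf} (h : a.g * b.g = b.g * a.g)
    (hsymm : f a.g b.g = f b.g a.g) : a * b = b * a := by
  ext
  · simp only [mul_q, hsymm, add_comm a.q]
  · exact h

end CocycleExtension

end Extension

open CocycleExtension in
theorem isTwoCoboundary_of_symm {A : Type} [CommGroup A] {f : A → A → QZ} (hf : IsTwoCocycle f)
    (hsymm : ∀ a b, f a b = f b a) : IsTwoCoboundary f := by
  let _ : CommGroup (CocycleExtension hf) :=
    { mul_comm := fun a b => mul_comm_of_g_commute (mul_comm a.g b.g) (hsymm a.g b.g) }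
  let ι : QZ →+ Additive (CocycleExtension hf) :=
    { toFun := fun q => .ofMul (central hf q)
      map_zero' := by simp
      map_add' := fun q r => by simp [central_add] }
  obtain ⟨retraction, hret⟩ := (Module.Baer.of_divisible QZ).extension_property_addMonoidHom ι
    (fun q r h => central_injective (Additive.ofMul.injective h)) (AddMonoidHom.id QZ)
  refine ⟨fun a => retraction (.ofMul ⟨0, a⟩), fun a b => ?_⟩
  have hmk : (⟨0, a⟩ * ⟨0, b⟩ : CocycleExtension hf) = central hf (f a b) * ⟨0, a * b⟩ := by
    show (⟨0 + 0 + f a b, a * b⟩ : CocycleExtension hf) = _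
    rw [central_mul_mk, zero_add, zero_add, add_zero]
  have := congrArg (fun e => retraction (.ofMul e)) hmk
  simp only [ofMul_mul, map_add] at this
  rw [show retraction (.ofMul (central hf (f a b))) = f a b from
    DFunLike.congr_fun hret (f a b)] at this
  rw [← sub_eq_of_eq_add this]
  abel

section Lifts

open CocycleExtension

variable {G : Type} [Group G] {f : G → G → QZ} (hf : IsTwoCocycle f)

theorem isTwoCoboundary_comp_iff {H : Type} [Group H] (i : H →* G) :
    IsTwoCoboundary (fun a b => f (i a) (i b)) ↔
      ∃ J : H →* CocycleExtension hf, ∀ v, (J v).g = i v := by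
  constructor
  · rintro ⟨c, hc⟩
    refine ⟨MonoidHom.mk' (fun v => ⟨-c v, i v⟩) fun u v => ?_, fun v => rfl⟩
    ext
    · show -c (u * v) = -c u + -c v + f (i u) (i v)
      rw [show f (i u) (i v) = _ from hc u v]
      abel
    · exact map_mul i u v
  · rintro ⟨J, hJ⟩
    refine ⟨fun v => -(J v).q, fun u v => ?_⟩
    have h := congrArg q (map_mul J u v)
    rw [mul_q, hJ, hJ] at h
    show f (i u) (i v) = -(J v).q - -(J (u * v)).q + -(J u).q
    rw [h]
    abel

theorem isTwoCoboundary_iff_exists_section :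
    IsTwoCoboundary f ↔ ∃ ρ : G →* CocycleExtension hf, ∀ x, (ρ x).g = x :=
  isTwoCoboundary_comp_iff hf (MonoidHom.id G)

theorem exists_lift_pow_eq_one {x : G} {n : ℕ} (hn : n ≠ 0) (hx : x ^ n = 1) :
    ∃ t : CocycleExtension hf, t.g = x ∧ t ^ n = 1 := by
  set y : CocycleExtension hf := ⟨0, x⟩
  have hy : (y ^ n).g = (1 : CocycleExtension hf).g := by
    show proj hf (y ^ n) = proj hf 1
    rw [map_pow, map_one]
    exact hx
  set q := (y ^ n).q - (1 : CocycleExtension hf).q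
  set r := DivisibleBy.div (-q) (n : ℤ)
  have hr : n • r = -q := by
    rw [← natCast_zsmul, DivisibleBy.div_cancel _ (Int.natCast_ne_zero.mpr hn)]
  refine ⟨y * central hf r, mul_one x, ?_⟩
  rw [(central_commute r y).symm.mul_pow, ← central_nsmul, hr, eq_mul_central_of_g_eq hy,
    one_mul, ← central_add, add_neg_cancel, central_zero]

theorem exists_eq_mul_central_of_g_eq {H : Type} [Group H] (φ ψ : H →* CocycleExtension hf)
    (h : ∀ v, (φ v).g = (ψ v).g) :
    ∃ d : Additive H →+ QZ, ∀ v, φ v = ψ v * central hf (d (.ofMul v)) := by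
  have hd : ∀ v, φ v = ψ v * central hf ((φ v).q - (ψ v).q) := fun v =>
    eq_mul_central_of_g_eq (h v)
  refine ⟨AddMonoidHom.mk' (fun v => (φ v.toMul).q - (ψ v.toMul).q) fun u v => ?_, hd⟩
  apply central_injective (hf := hf)
  apply mul_left_cancel (a := ψ (u.toMul * v.toMul))
  rw [toMul_add, ← hd, central_add, map_mul ψ,
    (central_commute _ (ψ v.toMul)).symm.mul_mul_mul_comm, ← hd, ← hd, map_mul]

theorem exists_lift_conj_eq {A : Type} [CommGroup A] (i : A →* G) (σ : A →* A)
    (hsymm : ∀ x y, x * y = y * x → f x y = f y x)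
    (J₀ : A →* CocycleExtension hf) (hJ₀ : ∀ v, (J₀ v).g = i v)
    (t : CocycleExtension hf) (hσ : ∀ v, t.g⁻¹ * i v * t.g = i (σ v)) :
    ∃ J : A →* CocycleExtension hf, (∀ v, (J v).g = i v) ∧ ∀ v, t⁻¹ * J v * t = J (σ v) := by
  obtain ⟨d, hd⟩ := exists_eq_mul_central_of_g_eq hf ((MulAut.conj t⁻¹).toMonoidHom.comp J₀)
    (J₀.comp σ) fun v => by simp [hJ₀, ← hσ]
  simp only [MonoidHom.comp_apply, MulEquiv.coe_toMonoidHom, MulAut.conj_apply, inv_inv] at hd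
  let τ : Additive A →+ Additive A := σ.toAdditive - AddMonoidHom.id _
  have hker : τ.ker ≤ d.ker := by
    intro v hv
    have hσv : σ v.toMul = v.toMul :=
      congrArg Additive.toMul (sub_eq_zero.mp hv : σ.toAdditive v = v)
    have hcomm : t * J₀ v.toMul = J₀ v.toMul * t := by
      have hg := hσ v.toMul
      rw [hσv, mul_assoc, inv_mul_eq_iff_eq_mul] at hg
      exact mul_comm_of_g_commute (by rw [hJ₀]; exact hg.symm)
        (by rw [hJ₀]; exact hsymm _ _ hg.symm)
    have := hd v.toMul
    rw [hσv, mul_assoc, ← hcomm, inv_mul_cancel_left, left_eq_mul, ← central_zero] at this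
    exact central_injective this
  obtain ⟨μ, hμ⟩ := exists_addMonoidHom_comp_eq_of_ker_le τ d hker
  refine ⟨MonoidHom.mk' (fun v => J₀ v * central hf (μ (.ofMul v))) fun u v => ?_,
    fun v => by simp [hJ₀], fun v => ?_⟩
  · rw [map_mul, ofMul_mul, map_add, central_add,
      (central_commute _ (J₀ v)).symm.mul_mul_mul_comm]
  · have hμv : d (.ofMul v) + μ (.ofMul v) = μ (.ofMul (σ v)) := by
      rw [← hμ]
      simp [τ]
    simp only [MonoidHom.mk'_apply, mul_assoc]
    rw [(central_commute _ t).eq, ← mul_assoc, ← mul_assoc, hd, mul_assoc, ← central_add, hμv]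

end Lifts

section GroupIdentities

variable {H : Type} [Group H]

theorem mul_comm_of_inv_mul_inv_mul_mul_eq_one {x y : H} (h : x⁻¹ * y⁻¹ * x * y = 1) :
    x * y = y * x := by
  calc x * y = y * x * (x⁻¹ * y⁻¹ * x * y) := by group
    _ = y * x := by rw [h, mul_one]

theorem conj_eq_of_inv_mul_inv_mul_mul_mul_inv_eq_one {x t y : H}
    (h : x⁻¹ * t⁻¹ * x * t * y⁻¹ = 1) : t⁻¹ * x * t = x * y := by
  calc t⁻¹ * x * t = x * (x⁻¹ * t⁻¹ * x * t * y⁻¹) * y := by group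
    _ = x * y := by rw [h, mul_one]

end GroupIdentities

theorem _root_.PresentedGroup.mk_of {α : Type} {rels : Set (FreeGroup α)} (x : α) :
    PresentedGroup.mk rels (.of x) = .of x :=
  rfl

namespace Phi35

open PresentedGroup

variable (p : ℕ)

local notation "Φ" => PresentedGroup (rels p)

theorem of_a_pow_eq_one : (of .a : Φ) ^ p = 1 := by
  simpa [mk_of] using one_of_mem (rels := rels p) (x := .of .a ^ p)
    (by simp only [rels, Set.mem_insert_iff, true_or, or_true])

theorem of_mul_of_comm {x y : Gen} (hx : x ≠ .a) (hy : y ≠ .a) :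
    (of x : Φ) * of y = of y * of x := by
  have key : ∀ {x y : Gen}, c (.of x) (.of y) ∈ rels p → (of x : Φ) * of y = of y * of x :=
    fun h => mul_comm_of_inv_mul_inv_mul_mul_eq_one (by simpa [c, mk_of] using one_of_mem h)
  cases x <;> cases y <;> first
    | exact absurd rfl hx | exact absurd rfl hy | rfl
    | (apply key; simp only [rels, Set.mem_insert_iff, true_or, or_true]; done)
    | (apply Eq.symm; apply key; simp only [rels, Set.mem_insert_iff, true_or, or_true])

theorem of_a_mul_of_a5 : (of .a : Φ) * of .a5 = of .a5 * of .a :=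
  mul_comm_of_inv_mul_inv_mul_mul_eq_one <| by
    simpa [c, mk_of] using one_of_mem (rels := rels p) (x := c (.of .a) (.of .a5))
      (by simp only [rels, Set.mem_insert_iff, true_or, or_true])

theorem conj_of_eq_mul {x y : Gen} (h : c (.of x) (.of .a) * (.of y)⁻¹ ∈ rels p) :
    (of .a : Φ)⁻¹ * of x * of .a = of x * of y :=
  conj_eq_of_inv_mul_inv_mul_mul_mul_inv_eq_one (by simpa [c, mk_of] using one_of_mem h)

def A : Subgroup Φ := Subgroup.closure (of '' {x | x ≠ .a})

instance : CommGroup (A p) :=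
  have : IsMulCommutative (A p) := Subgroup.isMulCommutative_closure <| by
    rintro _ ⟨x, hx, rfl⟩ _ ⟨y, hy, rfl⟩
    exact of_mul_of_comm p hx hy
  IsMulCommutative.instCommGroup

theorem of_mem_A {x : Gen} (hx : x ≠ .a) : (of x : Φ) ∈ A p :=
  Subgroup.subset_closure ⟨x, hx, rfl⟩

theorem conj_of_mem_A {x : Gen} (hx : x ≠ .a) : (of .a : Φ)⁻¹ * of x * of .a ∈ A p := by
  have mem : ∀ {y : Gen}, y ≠ .a → (of y : Φ) ∈ A p := of_mem_A p
  cases x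
  · exact absurd rfl hx
  · rw [conj_of_eq_mul p (y := .a2) (by simp only [rels, Set.mem_insert_iff, true_or])]
    exact mul_mem (mem nofun) (mem nofun)
  · rw [conj_of_eq_mul p (y := .a3) (by simp only [rels, Set.mem_insert_iff, true_or, or_true])]
    exact mul_mem (mem nofun) (mem nofun)
  · rw [conj_of_eq_mul p (y := .a4) (by simp only [rels, Set.mem_insert_iff, true_or, or_true])]
    exact mul_mem (mem nofun) (mem nofun)
  · rw [conj_of_eq_mul p (y := .a5) (by simp only [rels, Set.mem_insert_iff, true_or, or_true])]
    exact mul_mem (mem nofun) (mem nofun)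
  · rw [mul_assoc, ← of_a_mul_of_a5, inv_mul_cancel_left]
    exact mem nofun

theorem conj_mem_A {v : Φ} (hv : v ∈ A p) : (of .a)⁻¹ * v * of .a ∈ A p := by
  induction hv using Subgroup.closure_induction with
  | mem _ hx => obtain ⟨x, hx, rfl⟩ := hx; exact conj_of_mem_A p hx
  | one => simp
  | mul u w _ _ hu hw => simpa [mul_assoc] using mul_mem hu hw
  | inv u _ hu => simpa [mul_assoc] using inv_mem hu

def conjA : A p →* A p :=
  MonoidHom.mk' (fun v => ⟨(of .a : Φ)⁻¹ * (v : Φ) * of .a, conj_mem_A p v.2⟩) fun u v => by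
    ext
    simp [mul_assoc]

variable {p} in
def generatorImage {E : Type} [Group E] (t : E) (J : A p →* E) : Gen → E
  | .a => t
  | .a1 => J ⟨of .a1, of_mem_A p nofun⟩
  | .a2 => J ⟨of .a2, of_mem_A p nofun⟩
  | .a3 => J ⟨of .a3, of_mem_A p nofun⟩
  | .a4 => J ⟨of .a4, of_mem_A p nofun⟩
  | .a5 => J ⟨of .a5, of_mem_A p nofun⟩

theorem exists_splitting {E : Type} [Group E] (π : E →* Φ) (t : E) (J : A p →* E)
    (hπt : π t = of .a) (hπJ : ∀ v, π (J v) = v) (ht : t ^ p = 1)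
    (hJ : ∀ v, t⁻¹ * J v * t = J (conjA p v)) : ∃ ρ : Φ →* E, ∀ x, π (ρ x) = x := by
  set Y := generatorImage t J
  have hπY : ∀ x, π (Y x) = of x := by
    intro x
    cases x <;> simp [Y, generatorImage, hπt, hπJ]
  have hJ' : ∀ x v, x * t⁻¹ * J v * t = x * J (conjA p v) := fun x v => by
    rw [← hJ, mul_assoc, mul_assoc, mul_assoc]
  have hrels : ∀ r ∈ rels p, FreeGroup.lift Y r = 1 := by
    intro r hr
    have hπr : π (FreeGroup.lift Y r) = 1 := by
      rw [← one_of_mem hr, ← MonoidHom.comp_apply]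
      congr 1
      exact FreeGroup.ext_hom _ _ fun x => by simp [hπY, mk_of]
    -- Each relator is sent into the range of `J`, on which `π` is injective.
    obtain ⟨w, hw⟩ : ∃ w, FreeGroup.lift Y r = J w := by
      simp only [rels, Set.mem_insert_iff, Set.mem_singleton_iff] at hr
      rcases hr with rfl | rfl | rfl | rfl | rfl | rfl | rfl | rfl | rfl | rfl | rfl | rfl | rfl |
        rfl | rfl | rfl | rfl | rfl | rfl | rfl | rfl
      all_goals simp only [c, map_mul, map_inv, map_pow, FreeGroup.lift_apply_of, Y,
        generatorImage]
      all_goals simp only [← map_inv, ← map_pow, hJ, hJ', ← map_mul, ht]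
      all_goals first | exact ⟨_, rfl⟩ | exact ⟨1, (map_one J).symm⟩
    rw [hw, show w = 1 from Subtype.ext (by rw [← hπJ, ← hw, hπr]; rfl), map_one]
  refine ⟨toGroup hrels, DFunLike.congr_fun (?_ : π.comp (toGroup hrels) = MonoidHom.id Φ)⟩
  exact PresentedGroup.ext fun x => by simp [hπY]

end Phi35

open CocycleExtension in
theorem bogomolov_trivial_Phi35 (p : ℕ) (hp : p.Prime) :
    BogomolovMultiplierIsTrivial (PresentedGroup (rels p)) := by
  intro f hf hb
  have hsymm : ∀ x y, x * y = y * x → f x y = f y x := fun x y => apply_comm_of_bicyclic hb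
  obtain ⟨J₀, hJ₀⟩ := (isTwoCoboundary_comp_iff hf (Phi35.A p).subtype).mp <|
    isTwoCoboundary_of_symm (hf.comp _) fun a b => hsymm _ _ (congrArg Subtype.val (mul_comm a b))
  obtain ⟨t, htg, htp⟩ := exists_lift_pow_eq_one hf hp.ne_zero (Phi35.of_a_pow_eq_one p)
  obtain ⟨J, hJg, hJt⟩ := exists_lift_conj_eq hf (Phi35.A p).subtype (Phi35.conjA p) hsymm J₀ hJ₀ t
    fun v => by rw [htg]; rfl
  obtain ⟨ρ, hρ⟩ := Phi35.exists_splitting p (proj hf) t J htg hJg htp hJt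
  exact (isTwoCoboundary_iff_exists_section hf).mpr ⟨ρ, hρ⟩

end Stmt11
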